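/- Suppose that for every integer k with δ+1 ≤ k ≤ ⌊b/2⌋ the curve B_k is δ-changing. Then Π has at least r distinct balanced transpositions; that is, the number of unordered pairs {p, q} of points swapped by some balanced transposition of Π is at least r. -/

import Mathlib

open Finset

/-- An allowable sequence on `n` points (the points are the elements of `Fin n`).
`pos t x` is the position (from left to right, `0`-based) of point `x`
in the linear ordering `π^t`. -/
structure AllowableSeq (n : ℕ) where
  pos : ℤ → Equiv.Perm (Fin n)
  adj : ∀ t : ℤ, ∃ p q : Fin n,
    ((pos t q : ℕ) = (pos t p : ℕ) + 1) ∧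
    pos (t + 1) = (Equiv.swap p q).trans (pos t)
  rev : ∀ t : ℤ, pos (t + (n.choose 2 : ℤ)) = (pos t).trans Fin.revPerm

namespace AllowableSeq

variable {n : ℕ}

/-- The weight of a point: `+1` for blue, `-1` for red. -/
def wt (blue : Fin n → Bool) (x : Fin n) : ℤ := if blue x then 1 else -1

/-- The transposition `τ_{t+1}` (leading from `π^t` to `π^{t+1}`) swaps the points `p` and `q`. -/
def SwapsAt (A : AllowableSeq n) (t : ℤ) (p q : Fin n) : Prop :=
  p ≠ q ∧ A.pos (t + 1) = (Equiv.swap p q).trans (A.pos t)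

/-- `τ_{t+1}` is a balanced transposition swapping `p` and `q`: one of them is blue and the
other red, and the total weight of the points strictly to the left of the adjacent
pair in `π^t` equals `δ`. -/
def BalancedSwap (A : AllowableSeq n) (blue : Fin n → Bool) (δ : ℤ) (t : ℤ)
    (p q : Fin n) : Prop :=
  A.SwapsAt t p q ∧ (blue p ↔ ¬ blue q) ∧
  (∑ x : Fin n, if (A.pos t x : ℕ) < min (A.pos t p : ℕ) (A.pos t q : ℕ)
      then wt blue x else 0) = δ

/-- The set of unordered pairs of points swapped by some balanced transposition of the
allowable sequence; its cardinality is the number of distinct balanced transpositions. -/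
def balancedPairs (A : AllowableSeq n) (blue : Fin n → Bool) (δ : ℤ) : Set (Sym2 (Fin n)) :=
  { s | ∃ p q t, s = s(p, q) ∧ A.BalancedSwap blue δ t p q }

/-- A curve: a map `ℤ → Fin n` that is periodic with period `2 * C(n,2)`. -/
def IsCurve (A : AllowableSeq n) (γ : ℤ → Fin n) : Prop :=
  ∀ t : ℤ, γ (t + 2 * (n.choose 2 : ℤ)) = γ t

/-- The weight of a curve `γ` at time `t`: the sum of the weights of the points lying
strictly to the left of `γ t` in `π^t`. -/
def cweight (A : AllowableSeq n) (blue : Fin n → Bool) (γ : ℤ → Fin n) (t : ℤ) : ℤ :=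
  ∑ x : Fin n, if A.pos t x < A.pos t (γ t) then wt blue x else 0

/-- `γ` is the curve `Q_k` (with `k` 1-based): at every time `t`, `γ t` is the `k`-th point
of `Q` from left to right in `π^t`, i.e. `γ t ∈ Q` and exactly `k - 1` points of `Q` lie
strictly to the left of `γ t`. -/
def IsKth (A : AllowableSeq n) (Q : Finset (Fin n)) (k : ℕ) (γ : ℤ → Fin n) : Prop :=
  ∀ t : ℤ, γ t ∈ Q ∧ (Q.filter (fun x => A.pos t x < A.pos t (γ t))).card = k - 1

/-- The mirror curve `γ̄` of `γ`, defined by `γ̄ (t + C(n,2)) = γ t`. -/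
def mirror (γ : ℤ → Fin n) : ℤ → Fin n := fun t => γ (t - (n.choose 2 : ℤ))

/-- A border: a curve that is either blue and `≥δ` or red and `≤δ`, such that
(I) consecutive values are equal or have no point of the same colour between them, and
(II) it lies strictly to the left of its mirror curve. -/
def IsBorder (A : AllowableSeq n) (blue : Fin n → Bool) (δ : ℤ) (γ : ℤ → Fin n) : Prop :=
  A.IsCurve γ ∧
  (∀ t : ℤ, A.pos t (γ t) < A.pos t (mirror γ t)) ∧
  (((∀ t : ℤ, blue (γ t) = true) ∧ (∀ t : ℤ, δ ≤ A.cweight blue γ t) ∧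
      ∀ t : ℤ, γ (t + 1) = γ t ∨ ∀ x : Fin n, blue x = true →
        ¬ (min (A.pos (t+1) (γ t)) (A.pos (t+1) (γ (t+1))) < A.pos (t+1) x ∧
           A.pos (t+1) x < max (A.pos (t+1) (γ t)) (A.pos (t+1) (γ (t+1)))))
   ∨ ((∀ t : ℤ, blue (γ t) = false) ∧ (∀ t : ℤ, A.cweight blue γ t ≤ δ) ∧
      ∀ t : ℤ, γ (t + 1) = γ t ∨ ∀ x : Fin n, blue x = false →
        ¬ (min (A.pos (t+1) (γ t)) (A.pos (t+1) (γ (t+1))) < A.pos (t+1) x ∧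
           A.pos (t+1) x < max (A.pos (t+1) (γ t)) (A.pos (t+1) (γ (t+1))))))

/-- `Γ` is `⪯`-maximal among all borders: it is a border and no border lies strictly
to its right. -/
def IsMaxBorder (A : AllowableSeq n) (blue : Fin n → Bool) (δ : ℤ) (Γ : ℤ → Fin n) : Prop :=
  A.IsBorder blue δ Γ ∧
  ∀ γ : ℤ → Fin n, A.IsBorder blue δ γ → ¬ (∀ t : ℤ, A.pos t (Γ t) < A.pos t (γ t))

/-- The curve `α` has the weight change `a ⇝ b` between the curves `lo` and `hi`:
at some time `t` its weight changes from `a` to `b`, the change occurring to the right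
of `lo` and to the left of `hi`. -/
def HasChangeBetween (A : AllowableSeq n) (blue : Fin n → Bool) (a b : ℤ)
    (α lo hi : ℤ → Fin n) : Prop :=
  ∃ t : ℤ, A.cweight blue α t = a ∧ A.cweight blue α (t+1) = b ∧
    A.pos t (lo t) ≤ A.pos t (α t) ∧ A.pos (t+1) (lo (t+1)) < A.pos (t+1) (α (t+1)) ∧
    A.pos t (α t) ≤ A.pos t (hi t) ∧ A.pos (t+1) (α (t+1)) < A.pos (t+1) (hi (t+1))

/-- The number of blue points strictly to the left of the adjacent pair `p, q` in `π^t`. -/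
def blueLeftPair (A : AllowableSeq n) (blue : Fin n → Bool) (t : ℤ) (p q : Fin n) : ℕ :=
  (Finset.univ.filter (fun y => blue y = true ∧
    (A.pos t y : ℕ) < min (A.pos t p : ℕ) (A.pos t q : ℕ))).card

end AllowableSeq

/-!
For `δ < k ≤ ⌈b/2⌉` the `k`-th blue curve `B_k` is `δ`-changing: for `k ≤ ⌊b/2⌋` by hypothesis,
and for the middle curve of an odd `b` because half a period later it is again the middle blue
point, now with weight `2δ - 1 - w`. Its weight changes only when `B_k` is swapped with an
adjacent red point, and then by exactly one, so by periodicity it steps from `δ - 1` up to `δ` and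
from `δ` down to `δ - 1`; each such step is a balanced transposition.

These `r` transpositions swap distinct pairs. A pair `{β, ρ}` (`β` blue, `ρ` red) is swapped
exactly at the times `t₀ + j * C(n,2)`, where the ordering is `π^t₀` or its reverse, so the number
of blue points beyond `β` on the side of `ρ` depends only on the pair. It is `k - 1` for an upward
crossing of `B_k` and `b - k` for a downward one, and these values run through `[δ, b - δ)` once
each.
-/

theorem Fin.trans_revPerm_trans_revPerm {n : ℕ} (σ : Equiv.Perm (Fin n)) :
    (σ.trans Fin.revPerm).trans Fin.revPerm = σ := by
  ext; simp

theorem Fin.choose_two_pos_of_ne {n : ℕ} {u v : Fin n} (huv : u ≠ v) : 0 < n.choose 2 :=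
  Nat.choose_pos (by have := u.isLt; have := v.isLt; omega)

theorem Fin.swap_lt_swap_iff_of_val_eq_succ {n : ℕ} {i j a c : Fin n} (hij : (j : ℕ) = i + 1)
    (h : s(a, c) ≠ s(i, j)) : Equiv.swap i j a < Equiv.swap i j c ↔ a < c := by
  simp only [Ne, Sym2.eq_iff, not_or, not_and] at h
  simp only [Equiv.swap_apply_def, Fin.lt_def, Fin.ext_iff] at *
  split_ifs <;> omega

theorem Equiv.sym2_eq_of_swap_eq {α : Type*} [DecidableEq α] {p q u v : α} (hpq : p ≠ q)
    (h : Equiv.swap p q = Equiv.swap u v) : s(p, q) = s(u, v) := by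
  have hp := Equiv.ext_iff.1 h p
  rw [Equiv.swap_apply_left, Equiv.swap_apply_def] at hp
  split_ifs at hp <;> grind [Sym2.eq_swap]

theorem Int.exists_mem_Ico_not_and_succ {P : ℤ → Prop} {a : ℤ} {N : ℕ} (ha : ¬P a)
    (hN : P (a + N)) : ∃ s ∈ Finset.Ico a (a + N), ¬P s ∧ P (s + 1) := by
  induction N with
  | zero => simp_all
  | succ N ih =>
    by_cases h : P (a + N)
    · obtain ⟨s, hs, hs'⟩ := ih h
      exact ⟨s, by simp only [Finset.mem_Ico] at hs ⊢; omega, hs'⟩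
    · refine ⟨a + N, by simp, h, ?_⟩
      rwa [Nat.cast_succ, ← add_assoc] at hN

theorem Function.Periodic.exists_not_and_succ {P : ℤ → Prop} {T : ℤ}
    (hP : Function.Periodic P T) (hT : 0 < T) {a b : ℤ} (ha : ¬P a) (hb : P b) :
    ∃ s, ¬P s ∧ P (s + 1) := by
  set m := (a - b).toNat
  have hm : a ≤ b + m * T := by nlinarith [Int.self_le_toNat (a - b)]
  have hb' : P (a + (b + m * T - a).toNat) := by
    rwa [Int.toNat_of_nonneg (by omega), add_sub_cancel, hP.nat_mul m]
  obtain ⟨s, -, hs⟩ := Int.exists_mem_Ico_not_and_succ ha hb'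
  exact ⟨s, hs⟩

namespace AllowableSeq

variable {n : ℕ}

section Transpositions

variable (A : AllowableSeq n)

theorem pos_succ_apply {t : ℤ} {p q : Fin n} (h : A.SwapsAt t p q) (x : Fin n) :
    A.pos (t + 1) x = Equiv.swap (A.pos t p) (A.pos t q) (A.pos t x) := by
  rw [h.2, Equiv.swap_apply_apply]
  simp [Equiv.Perm.mul_apply]

theorem pos_succ_of_ne {t : ℤ} {p q x : Fin n} (h : A.SwapsAt t p q) (hp : x ≠ p)
    (hq : x ≠ q) : A.pos (t + 1) x = A.pos t x := by
  rw [h.2, Equiv.trans_apply, Equiv.swap_apply_of_ne_of_ne hp hq]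

theorem pos_succ_left {t : ℤ} {p q : Fin n} (h : A.SwapsAt t p q) :
    A.pos (t + 1) p = A.pos t q := by
  rw [h.2, Equiv.trans_apply, Equiv.swap_apply_left]

theorem pos_succ_right {t : ℤ} {p q : Fin n} (h : A.SwapsAt t p q) :
    A.pos (t + 1) q = A.pos t p := by
  rw [h.2, Equiv.trans_apply, Equiv.swap_apply_right]

theorem val_pos_ne {t : ℤ} {x y : Fin n} (h : x ≠ y) : (A.pos t x : ℕ) ≠ A.pos t y :=
  fun he => h ((A.pos t).injective (Fin.ext he))

noncomputable def swappedPair (t : ℤ) : Sym2 (Fin n) :=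
  s((A.adj t).choose, (A.adj t).choose_spec.choose)

theorem swappedPair_spec (t : ℤ) : ∃ p q, A.swappedPair t = s(p, q) ∧ A.SwapsAt t p q ∧
    (A.pos t q : ℕ) = A.pos t p + 1 := by
  obtain ⟨hadj, hpos⟩ := (A.adj t).choose_spec.choose_spec
  refine ⟨_, _, rfl, ⟨fun h => ?_, hpos⟩, hadj⟩
  have := congrArg (fun x => (A.pos t x : ℕ)) h
  omega

theorem swappedPair_eq_of_swapsAt {t : ℤ} {p q : Fin n} (h : A.SwapsAt t p q) :
    A.swappedPair t = s(p, q) := by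
  obtain ⟨u, v, huv, hs, -⟩ := A.swappedPair_spec t
  rw [huv]
  refine Equiv.sym2_eq_of_swap_eq hs.1 (Equiv.ext fun x => (A.pos t).injective ?_)
  simpa using congrArg (· x) (hs.2.symm.trans h.2)

theorem pos_add_two_mul_choose (t : ℤ) : A.pos (t + 2 * n.choose 2) = A.pos t := by
  rw [two_mul, ← add_assoc, A.rev, A.rev, Fin.trans_revPerm_trans_revPerm]

theorem pos_add_int_mul_choose (t j : ℤ) :
    A.pos (t + j * n.choose 2) = A.pos t ∨
      A.pos (t + j * n.choose 2) = (A.pos t).trans Fin.revPerm := by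
  induction j using Int.induction_on with
  | zero => simp
  | succ j ih =>
    rw [add_one_mul, ← add_assoc, A.rev]
    rcases ih with h | h <;> simp [h, Fin.trans_revPerm_trans_revPerm]
  | pred j ih =>
    have h := A.rev (t + (-j - 1) * n.choose 2)
    rw [add_assoc, ← add_one_mul, sub_add_cancel] at h
    rw [← Fin.trans_revPerm_trans_revPerm (A.pos (t + (-j - 1) * _)), ← h]
    rcases ih with h' | h' <;> rw [h'] <;> simp [Fin.trans_revPerm_trans_revPerm]

theorem swapsAt_add_choose {t : ℤ} {p q : Fin n} (h : A.SwapsAt t p q) :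
    A.SwapsAt (t + n.choose 2) p q :=
  ⟨h.1, by rw [add_right_comm, A.rev, A.rev, h.2]; rfl⟩

theorem swappedPair_periodic : Function.Periodic A.swappedPair (n.choose 2) := fun t => by
  obtain ⟨p, q, hpq, h, -⟩ := A.swappedPair_spec t
  rw [hpq, A.swappedPair_eq_of_swapsAt (A.swapsAt_add_choose h)]

theorem swappedPair_eq_of_not_lt_iff {t : ℤ} {u v : Fin n}
    (h : ¬(A.pos (t + 1) u < A.pos (t + 1) v ↔ A.pos t u < A.pos t v)) :
    A.swappedPair t = s(u, v) := by
  obtain ⟨p, q, hpq, hs, hadj⟩ := A.swappedPair_spec t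
  rw [hpq]
  by_contra hne
  refine h ?_
  rw [A.pos_succ_apply hs, A.pos_succ_apply hs]
  refine Fin.swap_lt_swap_iff_of_val_eq_succ hadj fun he => hne ?_
  exact (Sym2.map.injective (A.pos t).injective (by rw [Sym2.map_mk, Sym2.map_mk]; exact he)).symm

theorem exists_mem_Ico_swappedPair_eq {u v : Fin n} (huv : u ≠ v) (t₀ : ℤ) :
    ∃ s ∈ Finset.Ico t₀ (t₀ + n.choose 2), A.swappedPair s = s(u, v) := by
  wlog hlt : A.pos t₀ u < A.pos t₀ v generalizing u v
  · obtain ⟨s, hs, h⟩ := this huv.symm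
      (lt_of_le_of_ne (not_lt.1 hlt) fun h => huv ((A.pos t₀).injective h).symm)
    exact ⟨s, hs, h.trans Sym2.eq_swap⟩
  have hrev : ¬(A.pos (t₀ + (n.choose 2 : ℕ)) u < A.pos (t₀ + (n.choose 2 : ℕ)) v) := by
    simpa [A.rev, Fin.rev_lt_rev] using hlt.le
  obtain ⟨s, hs, hs₁, hs₂⟩ :=
    Int.exists_mem_Ico_not_and_succ (P := fun s => ¬(A.pos s u < A.pos s v)) (not_not.2 hlt) hrev
  exact ⟨s, hs, A.swappedPair_eq_of_not_lt_iff (by tauto)⟩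

theorem injOn_swappedPair (t₀ : ℤ) :
    Set.InjOn A.swappedPair (Finset.Ico t₀ (t₀ + n.choose 2)) := by
  classical
  apply Finset.injOn_of_card_image_eq
  have himage : (Finset.Ico t₀ (t₀ + n.choose 2)).image A.swappedPair =
      Finset.univ.filter fun z : Sym2 (Fin n) => ¬z.IsDiag := by
    ext z
    simp only [Finset.mem_image, Finset.mem_filter, Finset.mem_univ, true_and]
    constructor
    · rintro ⟨s, -, rfl⟩
      obtain ⟨p, q, hpq, hs, -⟩ := A.swappedPair_spec s
      simpa [hpq] using hs.1
    · induction z using Sym2.ind with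
      | _ u v => exact fun huv => A.exists_mem_Ico_swappedPair_eq (by simpa using huv) t₀
  rw [himage, ← Fintype.card_subtype, Sym2.card_subtype_not_diag, Fintype.card_fin]
  simp

theorem pos_eq_or_eq_trans_revPerm_of_swappedPair_eq {t t' : ℤ}
    (h : A.swappedPair t' = A.swappedPair t) :
    A.pos t' = A.pos t ∨ A.pos t' = (A.pos t).trans Fin.revPerm := by
  obtain ⟨p, q, -, hs, -⟩ := A.swappedPair_spec t
  have hC : (0 : ℤ) < n.choose 2 := by exact_mod_cast Fin.choose_two_pos_of_ne hs.1
  have hshift := A.swappedPair_periodic.sub_int_mul_eq (x := t') ((t' - t) / n.choose 2)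
  have hrev := A.pos_add_int_mul_choose t ((t' - t) / n.choose 2)
  have hinj := A.injOn_swappedPair t
  generalize ((n.choose 2 : ℕ) : ℤ) = C at hC hshift hrev hinj
  simp only [Int.cast_id] at hshift
  have hmod : t + (t' - t) % C = t' - (t' - t) / C * C := by
    rw [Int.emod_def]; ring
  have hwindow : t + (t' - t) % C = t := hinj
    (by simp [Int.emod_nonneg _ hC.ne', Int.emod_lt_of_pos _ hC])
    (by simp [hC])
    (by rw [hmod, hshift, h])
  have ht' : t' = t + (t' - t) / C * C := by linarith
  rwa [ht']

end Transpositions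

section LeftRight

variable (A : AllowableSeq n)

def leftOf (t : ℤ) (x : Fin n) : Finset (Fin n) := univ.filter fun y => A.pos t y < A.pos t x

def rightOf (t : ℤ) (x : Fin n) : Finset (Fin n) := univ.filter fun y => A.pos t x < A.pos t y

@[simp]
theorem mem_leftOf {t : ℤ} {x y : Fin n} : y ∈ A.leftOf t x ↔ A.pos t y < A.pos t x := by
  simp [leftOf]

@[simp]
theorem mem_rightOf {t : ℤ} {x y : Fin n} : y ∈ A.rightOf t x ↔ A.pos t x < A.pos t y := by
  simp [rightOf]

theorem filter_pos_lt_eq_inter_leftOf (Q : Finset (Fin n)) (t : ℤ) (x : Fin n) :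
    Q.filter (fun y => A.pos t y < A.pos t x) = Q ∩ A.leftOf t x := by
  rw [leftOf, Finset.inter_filter, Finset.inter_univ]

theorem cweight_eq_sum_leftOf (blue : Fin n → Bool) (γ : ℤ → Fin n) (t : ℤ) :
    A.cweight blue γ t = ∑ y ∈ A.leftOf t (γ t), wt blue y := by
  rw [cweight, leftOf, Finset.sum_filter]

theorem sum_inter_leftOf_add_sum_inter_rightOf {M : Type*} [AddCommMonoid M]
    (g : Fin n → M) {Q : Finset (Fin n)} {x : Fin n} (hx : x ∈ Q) (t : ℤ) :
    ∑ y ∈ Q ∩ A.leftOf t x, g y + g x + ∑ y ∈ Q ∩ A.rightOf t x, g y =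
      ∑ y ∈ Q, g y := by
  have hnot : Q.filter (fun y => ¬A.pos t y < A.pos t x) = insert x (Q ∩ A.rightOf t x) := by
    ext y
    simp only [Finset.mem_filter, Finset.mem_insert, Finset.mem_inter, mem_rightOf, not_lt]
    constructor
    · rintro ⟨hy, hle⟩
      rcases hle.lt_or_eq with hlt | heq
      · exact Or.inr ⟨hy, hlt⟩
      · exact Or.inl ((A.pos t).injective heq.symm)
    · rintro (rfl | ⟨hy, hlt⟩)
      · exact ⟨hx, le_rfl⟩
      · exact ⟨hy, hlt.le⟩
  rw [← Finset.sum_filter_add_sum_filter_not Q (fun y => A.pos t y < A.pos t x), hnot,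
    Finset.sum_insert (by simp), filter_pos_lt_eq_inter_leftOf, add_assoc]

theorem card_inter_leftOf_add_card_inter_rightOf {Q : Finset (Fin n)} {x : Fin n} (hx : x ∈ Q)
    (t : ℤ) : #(Q ∩ A.leftOf t x) + #(Q ∩ A.rightOf t x) + 1 = #Q := by
  have := A.sum_inter_leftOf_add_sum_inter_rightOf (fun _ => 1) hx t
  simp only [Finset.sum_const, smul_eq_mul, mul_one] at this
  omega

theorem leftOf_eq_rightOf_of_eq_trans_revPerm {t t' : ℤ}
    (h : A.pos t' = (A.pos t).trans Fin.revPerm) (x : Fin n) : A.leftOf t' x = A.rightOf t x := by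
  ext y; simp [h, Fin.rev_lt_rev]

theorem rightOf_eq_leftOf_of_eq_trans_revPerm {t t' : ℤ}
    (h : A.pos t' = (A.pos t).trans Fin.revPerm) (x : Fin n) : A.rightOf t' x = A.leftOf t x := by
  ext y; simp [h, Fin.rev_lt_rev]

theorem leftOf_succ_of_ne {t : ℤ} {p q x : Fin n} (h : A.SwapsAt t p q)
    (hadj : (A.pos t q : ℕ) = A.pos t p + 1) (hp : x ≠ p) (hq : x ≠ q) :
    A.leftOf (t + 1) x = A.leftOf t x := by
  ext y
  simp only [mem_leftOf, A.pos_succ_apply h]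
  refine Fin.swap_lt_swap_iff_of_val_eq_succ hadj fun he => ?_
  rcases Sym2.eq_iff.1 he with ⟨-, he⟩ | ⟨-, he⟩
  · exact hq ((A.pos t).injective he)
  · exact hp ((A.pos t).injective he)

theorem leftOf_of_val_eq_succ {t : ℤ} {p q : Fin n} (hadj : (A.pos t q : ℕ) = A.pos t p + 1) :
    A.leftOf t q = insert p (A.leftOf t p) := by
  ext y
  rcases eq_or_ne y p with rfl | hp
  · simp [← Fin.val_fin_lt, hadj]
  · simp only [Finset.mem_insert, mem_leftOf, hp, false_or, ← Fin.val_fin_lt]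
    have := A.val_pos_ne (t := t) hp
    omega

theorem notMem_leftOf_of_val_eq_succ {t : ℤ} {p q : Fin n}
    (hadj : (A.pos t q : ℕ) = A.pos t p + 1) : q ∉ A.leftOf t p := by
  simp only [mem_leftOf, not_lt, ← Fin.val_fin_le]
  omega

theorem leftOf_succ_left {t : ℤ} {p q : Fin n} (h : A.SwapsAt t p q)
    (hadj : (A.pos t q : ℕ) = A.pos t p + 1) :
    A.leftOf (t + 1) p = insert q (A.leftOf t p) := by
  ext y
  rcases eq_or_ne y p with rfl | hp
  · simp [h.1]
  rcases eq_or_ne y q with rfl | hq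
  · simp [A.pos_succ_left h, A.pos_succ_right h, ← Fin.val_fin_lt, hadj]
  · simp only [Finset.mem_insert, mem_leftOf, hq, false_or, A.pos_succ_left h,
      A.pos_succ_of_ne h hp hq, ← Fin.val_fin_lt]
    have := A.val_pos_ne (t := t) hp
    omega

theorem leftOf_succ_right {t : ℤ} {p q : Fin n} (h : A.SwapsAt t p q)
    (hadj : (A.pos t q : ℕ) = A.pos t p + 1) : A.leftOf (t + 1) q = A.leftOf t p := by
  ext y
  rcases eq_or_ne y p with rfl | hp
  · simp [A.pos_succ_left h, A.pos_succ_right h, ← Fin.val_fin_lt, hadj]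
  rcases eq_or_ne y q with rfl | hq
  · simp [A.pos_succ_right h, ← Fin.val_fin_lt, hadj]
  · simp [A.pos_succ_right h, A.pos_succ_of_ne h hp hq]

end LeftRight

section Kth

variable (A : AllowableSeq n)

theorem card_inter_leftOf_lt {Q : Finset (Fin n)} {t : ℤ} {x y : Fin n} (hx : x ∈ Q)
    (hxy : A.pos t x < A.pos t y) : #(Q ∩ A.leftOf t x) < #(Q ∩ A.leftOf t y) := by
  refine Finset.card_lt_card ((Finset.ssubset_iff_of_subset fun z hz => ?_).2 ⟨x, ?_, ?_⟩)
  · simp only [Finset.mem_inter, mem_leftOf] at hz ⊢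
    exact ⟨hz.1, hz.2.trans hxy⟩
  · simp [hx, hxy]
  · simp

theorem eq_of_card_inter_leftOf_eq {Q : Finset (Fin n)} {t : ℤ} {x y : Fin n} (hx : x ∈ Q)
    (hy : y ∈ Q) (h : #(Q ∩ A.leftOf t x) = #(Q ∩ A.leftOf t y)) : x = y := by
  rcases lt_trichotomy (A.pos t x) (A.pos t y) with hlt | heq | hlt
  · exact absurd h (A.card_inter_leftOf_lt hx hlt).ne
  · exact (A.pos t).injective heq
  · exact absurd h (A.card_inter_leftOf_lt hy hlt).ne'

variable {A} {Q : Finset (Fin n)} {k : ℕ} {γ : ℤ → Fin n}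

theorem isKth_iff :
    A.IsKth Q k γ ↔ ∀ t, γ t ∈ Q ∧ #(Q ∩ A.leftOf t (γ t)) = k - 1 := by
  simp only [IsKth, filter_pos_lt_eq_inter_leftOf]

theorem IsKth.eq_of_card (hγ : A.IsKth Q k γ) {t : ℤ} {x : Fin n} (hx : x ∈ Q)
    (h : #(Q ∩ A.leftOf t x) = k - 1) : γ t = x :=
  A.eq_of_card_inter_leftOf_eq (isKth_iff.1 hγ t).1 hx ((isKth_iff.1 hγ t).2.trans h.symm)

theorem IsKth.eq_of_pos_eq (hγ : A.IsKth Q k γ) {t t' : ℤ} (h : A.pos t' = A.pos t) :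
    γ t' = γ t :=
  hγ.eq_of_card (isKth_iff.1 hγ t).1 (by simp only [leftOf, h]; exact (isKth_iff.1 hγ t).2)

theorem IsKth.card_inter_rightOf (hγ : A.IsKth Q k γ) (hk : 1 ≤ k) (t : ℤ) :
    #(Q ∩ A.rightOf t (γ t)) = #Q - k := by
  have h1 := A.card_inter_leftOf_add_card_inter_rightOf (isKth_iff.1 hγ t).1 t
  have h2 := (isKth_iff.1 hγ t).2
  omega

variable (A) in
theorem exists_isKth (Q : Finset (Fin n)) {k : ℕ} (hk : 1 ≤ k) (hkQ : k ≤ #Q) :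
    ∃ γ, A.IsKth Q k γ := by
  have hkth (t : ℤ) : ∃ x, x ∈ Q ∧ #(Q ∩ A.leftOf t x) = k - 1 := by
    obtain ⟨x, hx, he⟩ := Finset.surj_on_of_inj_on_of_card_le (t := Finset.range #Q)
      (fun x _ => #(Q ∩ A.leftOf t x))
      (fun x hx => by
        have := A.card_inter_leftOf_add_card_inter_rightOf hx t
        simp only [Finset.mem_range]
        omega)
      (fun x y hx hy h => A.eq_of_card_inter_leftOf_eq hx hy h) (by simp) (k - 1)
      (by simp only [Finset.mem_range]; omega)
    exact ⟨x, hx, he.symm⟩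
  choose γ hγ using hkth
  exact ⟨γ, isKth_iff.2 hγ⟩

theorem IsKth.cweight_periodic (hγ : A.IsKth Q k γ) (blue : Fin n → Bool) :
    Function.Periodic (A.cweight blue γ) (2 * n.choose 2) := fun t => by
  rw [cweight, cweight, hγ.eq_of_pos_eq (A.pos_add_two_mul_choose t), A.pos_add_two_mul_choose]

end Kth

section Blue

variable {A : AllowableSeq n}

def blues (blue : Fin n → Bool) : Finset (Fin n) := univ.filter fun x => blue x = true

@[simp]
theorem mem_blues {blue : Fin n → Bool} {x : Fin n} : x ∈ blues blue ↔ blue x = true := by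
  simp [blues]

theorem sum_wt (blue : Fin n → Bool) :
    ∑ x, wt blue x = #(blues blue) - #(univ.filter fun x => blue x = false) := by
  simp [wt, Finset.sum_ite, blues, sub_eq_add_neg]

section Step

variable {blue : Fin n → Bool} {k : ℕ} {γ : ℤ → Fin n} {t : ℤ} {p q : Fin n}

theorem IsKth.cweight_succ_of_ne (hγ : A.IsKth (blues blue) k γ) (h : A.SwapsAt t p q)
    (hadj : (A.pos t q : ℕ) = A.pos t p + 1) (hp : γ t ≠ p) (hq : γ t ≠ q) :
    A.cweight blue γ (t + 1) = A.cweight blue γ t := by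
  obtain ⟨hmem, hcard⟩ := isKth_iff.1 hγ t
  have hnext : γ (t + 1) = γ t := hγ.eq_of_card hmem (by
    rw [A.leftOf_succ_of_ne h hadj hp hq, hcard])
  rw [cweight_eq_sum_leftOf, cweight_eq_sum_leftOf, hnext, A.leftOf_succ_of_ne h hadj hp hq]

theorem IsKth.cweight_succ_of_eq_left (hγ : A.IsKth (blues blue) k γ) (h : A.SwapsAt t p q)
    (hadj : (A.pos t q : ℕ) = A.pos t p + 1) (hp : γ t = p) :
    (blue q = false ∧ A.cweight blue γ (t + 1) = A.cweight blue γ t - 1) ∨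
      A.cweight blue γ (t + 1) = A.cweight blue γ t := by
  obtain ⟨hmem, hcard⟩ := isKth_iff.1 hγ t
  rw [hp] at hmem hcard
  simp only [cweight_eq_sum_leftOf, hp]
  cases hq : blue q
  · have hnext : γ (t + 1) = p := hγ.eq_of_card hmem (by
      rw [A.leftOf_succ_left h hadj, Finset.inter_insert_of_notMem (by simp [hq]), hcard])
    refine Or.inl ⟨rfl, ?_⟩
    rw [hnext, A.leftOf_succ_left h hadj, Finset.sum_insert (A.notMem_leftOf_of_val_eq_succ hadj),
      wt, hq, if_neg Bool.false_ne_true]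
    ring
  · have hnext : γ (t + 1) = q := hγ.eq_of_card (by simp [hq]) (by
      rw [A.leftOf_succ_right h hadj, hcard])
    exact Or.inr (by rw [hnext, A.leftOf_succ_right h hadj])

theorem IsKth.cweight_succ_of_eq_right (hγ : A.IsKth (blues blue) k γ) (h : A.SwapsAt t p q)
    (hadj : (A.pos t q : ℕ) = A.pos t p + 1) (hq : γ t = q) :
    (blue p = false ∧ A.cweight blue γ (t + 1) = A.cweight blue γ t + 1) ∨
      A.cweight blue γ (t + 1) = A.cweight blue γ t := by
  obtain ⟨hmem, hcard⟩ := isKth_iff.1 hγ t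
  rw [hq, A.leftOf_of_val_eq_succ hadj] at hcard
  rw [hq] at hmem
  simp only [cweight_eq_sum_leftOf, hq, A.leftOf_of_val_eq_succ hadj]
  have hpq := A.notMem_leftOf_of_val_eq_succ hadj
  cases hp : blue p
  · have hnext : γ (t + 1) = q := hγ.eq_of_card hmem (by
      rw [A.leftOf_succ_right h hadj, ← hcard, Finset.inter_insert_of_notMem (by simp [hp])])
    refine Or.inl ⟨rfl, ?_⟩
    rw [hnext, A.leftOf_succ_right h hadj, Finset.sum_insert (by simp), wt, hp,
      if_neg Bool.false_ne_true]
    ring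
  · have hnext : γ (t + 1) = p := hγ.eq_of_card (by simp [hp]) (by
      rw [A.leftOf_succ_left h hadj, ← hcard, Finset.inter_insert_of_mem hmem,
        Finset.inter_insert_of_mem (by simp [hp]), Finset.card_insert_of_notMem (by simp [hpq]),
        Finset.card_insert_of_notMem (by simp)])
    refine Or.inr ?_
    rw [hnext, A.leftOf_succ_left h hadj, Finset.sum_insert hpq, Finset.sum_insert (by simp),
      wt, wt, hp, mem_blues.1 hmem]

theorem IsKth.cweight_succ (hγ : A.IsKth (blues blue) k γ) (h : A.SwapsAt t p q)
    (hadj : (A.pos t q : ℕ) = A.pos t p + 1) :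
    (γ t = q ∧ blue p = false ∧ A.cweight blue γ (t + 1) = A.cweight blue γ t + 1) ∨
    (γ t = p ∧ blue q = false ∧ A.cweight blue γ (t + 1) = A.cweight blue γ t - 1) ∨
    A.cweight blue γ (t + 1) = A.cweight blue γ t := by
  by_cases hp : γ t = p
  · rcases hγ.cweight_succ_of_eq_left h hadj hp with ⟨hq, hw⟩ | hw
    exacts [Or.inr (Or.inl ⟨hp, hq, hw⟩), Or.inr (Or.inr hw)]
  by_cases hq : γ t = q
  · rcases hγ.cweight_succ_of_eq_right h hadj hq with ⟨hp', hw⟩ | hw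
    exacts [Or.inl ⟨hq, hp', hw⟩, Or.inr (Or.inr hw)]
  exact Or.inr (Or.inr (hγ.cweight_succ_of_ne h hadj hp hq))

end Step

theorem IsKth.cweight_add_choose_add_cweight {blue : Fin n → Bool} {k : ℕ} {γ : ℤ → Fin n}
    (hγ : A.IsKth (blues blue) k γ) (hk : 2 * k = #(blues blue) + 1) (t : ℤ) :
    A.cweight blue γ (t + n.choose 2) + A.cweight blue γ t + 1 = ∑ x, wt blue x := by
  have hrev := A.rev t
  have hmem := (isKth_iff.1 hγ t).1
  have hmid : γ (t + n.choose 2) = γ t := hγ.eq_of_card hmem (by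
    rw [A.leftOf_eq_rightOf_of_eq_trans_revPerm hrev, hγ.card_inter_rightOf (by omega)]
    omega)
  have hsum := A.sum_inter_leftOf_add_sum_inter_rightOf (wt blue) (Finset.mem_univ (γ t)) t
  simp only [Finset.univ_inter] at hsum
  rw [cweight_eq_sum_leftOf, cweight_eq_sum_leftOf, hmid,
    A.leftOf_eq_rightOf_of_eq_trans_revPerm hrev, ← hsum, wt, mem_blues.1 hmem]
  simp only [if_true]
  ring

variable (A) in
def IsChanging (blue : Fin n → Bool) (δ : ℤ) (γ : ℤ → Fin n) : Prop :=
  (∃ t, A.cweight blue γ t < δ) ∧ ∃ t, δ ≤ A.cweight blue γ t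

theorem IsKth.isChanging_of_two_mul_eq {blue : Fin n → Bool} {k : ℕ} {γ : ℤ → Fin n}
    (hγ : A.IsKth (blues blue) k γ) (hk : 2 * k = #(blues blue) + 1) {δ : ℤ}
    (hsum : ∑ x, wt blue x = 2 * δ) : A.IsChanging blue δ γ := by
  have hw := hγ.cweight_add_choose_add_cweight hk 0
  by_cases h₀ : A.cweight blue γ 0 < δ
  · exact ⟨⟨0, h₀⟩, 0 + n.choose 2, by omega⟩
  · exact ⟨⟨0 + n.choose 2, by omega⟩, 0, by omega⟩

variable (A) in
def sideOf (t : ℤ) (β ρ : Fin n) : Finset (Fin n) :=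
  if A.pos t ρ < A.pos t β then A.leftOf t β else A.rightOf t β

theorem sideOf_eq_of_pos_eq_or_eq_trans_revPerm {t t' : ℤ} {β ρ : Fin n} (hne : ρ ≠ β)
    (h : A.pos t' = A.pos t ∨ A.pos t' = (A.pos t).trans Fin.revPerm) :
    A.sideOf t' β ρ = A.sideOf t β ρ := by
  rcases h with h | h
  · simp only [sideOf, leftOf, rightOf, h]
  have hside : A.pos t' ρ < A.pos t' β ↔ ¬A.pos t ρ < A.pos t β := by
    simp only [h, Equiv.trans_apply, Fin.revPerm_apply, Fin.rev_lt_rev, not_lt]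
    exact ⟨le_of_lt, fun hle => lt_of_le_of_ne hle fun he => hne ((A.pos t).injective he).symm⟩
  simp only [sideOf, hside, ite_not, A.leftOf_eq_rightOf_of_eq_trans_revPerm h,
    A.rightOf_eq_leftOf_of_eq_trans_revPerm h]

variable (A) in
def BlueSideCount (blue : Fin n → Bool) (P : Sym2 (Fin n)) (j : ℕ) : Prop :=
  ∃ t β ρ, P = s(β, ρ) ∧ A.swappedPair t = P ∧ blue β = true ∧ blue ρ = false ∧
    #(blues blue ∩ A.sideOf t β ρ) = j

theorem BlueSideCount.unique {blue : Fin n → Bool} {P : Sym2 (Fin n)} {j j' : ℕ}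
    (h : A.BlueSideCount blue P j) (h' : A.BlueSideCount blue P j') : j = j' := by
  obtain ⟨t, β, ρ, rfl, hP, hβ, hρ, rfl⟩ := h
  obtain ⟨t', β', ρ', he, hP', hβ', hρ', rfl⟩ := h'
  obtain ⟨rfl, rfl⟩ : β' = β ∧ ρ' = ρ := by
    rcases Sym2.eq_iff.1 he with ⟨h₁, h₂⟩ | ⟨h₁, -⟩
    · exact ⟨h₁.symm, h₂.symm⟩
    · simp_all
  rw [sideOf_eq_of_pos_eq_or_eq_trans_revPerm (by rintro rfl; simp_all)
    (A.pos_eq_or_eq_trans_revPerm_of_swappedPair_eq (hP'.trans hP.symm))]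

theorem mk_mem_balancedPairs {blue : Fin n → Bool} {δ t : ℤ} {p q : Fin n}
    (h : A.SwapsAt t p q) (hadj : (A.pos t q : ℕ) = A.pos t p + 1) (hcol : blue p ≠ blue q)
    (hsum : ∑ y ∈ A.leftOf t p, wt blue y = δ) : s(p, q) ∈ A.balancedPairs blue δ := by
  refine ⟨p, q, t, rfl, h, by revert hcol; cases blue p <;> cases blue q <;> simp, ?_⟩
  rw [min_eq_left (by omega), ← hsum, leftOf, Finset.sum_filter]
  simp only [Fin.val_fin_lt]

variable {blue : Fin n → Bool} {k : ℕ} {γ : ℤ → Fin n}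

theorem IsKth.exists_up_crossing (hγ : A.IsKth (blues blue) k γ) {δ t : ℤ}
    (hlt : A.cweight blue γ t < δ) (hle : δ ≤ A.cweight blue γ (t + 1)) :
    ∃ P ∈ A.balancedPairs blue δ, A.BlueSideCount blue P (k - 1) := by
  obtain ⟨p, q, hpq, h, hadj⟩ := A.swappedPair_spec t
  obtain ⟨hmem, hcard⟩ := isKth_iff.1 hγ t
  rcases hγ.cweight_succ h hadj with ⟨hq, hp, hw⟩ | ⟨-, -, hw⟩ | hw
  · rw [hq] at hmem hcard
    have hleft : ∑ y ∈ A.leftOf t p, wt blue y = δ := by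
      have hw' := A.cweight_eq_sum_leftOf blue γ t
      rw [hq, A.leftOf_of_val_eq_succ hadj, Finset.sum_insert (by simp), wt, hp,
        if_neg Bool.false_ne_true] at hw'
      omega
    have hside : A.sideOf t q p = A.leftOf t q :=
      if_pos (by simp only [← Fin.val_fin_lt]; omega)
    refine ⟨s(p, q), mk_mem_balancedPairs h hadj (by simp [hp, mem_blues.1 hmem]) hleft,
      t, q, p, Sym2.eq_swap, hpq, mem_blues.1 hmem, hp, by rwa [hside]⟩
  · omega
  · omega

theorem IsKth.exists_down_crossing (hγ : A.IsKth (blues blue) k γ) (hk : 1 ≤ k) {δ t : ℤ}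
    (hle : δ ≤ A.cweight blue γ t) (hlt : A.cweight blue γ (t + 1) < δ) :
    ∃ P ∈ A.balancedPairs blue δ, A.BlueSideCount blue P (#(blues blue) - k) := by
  obtain ⟨p, q, hpq, h, hadj⟩ := A.swappedPair_spec t
  have hmem := (isKth_iff.1 hγ t).1
  have hright := hγ.card_inter_rightOf hk t
  rcases hγ.cweight_succ h hadj with ⟨-, -, hw⟩ | ⟨hp, hq, hw⟩ | hw
  · omega
  · rw [hp] at hmem hright
    have hleft : ∑ y ∈ A.leftOf t p, wt blue y = δ := by
      rw [← hp, ← cweight_eq_sum_leftOf]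
      omega
    have hside : A.sideOf t p q = A.rightOf t p :=
      if_neg (by simp only [← Fin.val_fin_lt]; omega)
    refine ⟨s(p, q), mk_mem_balancedPairs h hadj (by simp [hq, mem_blues.1 hmem]) hleft,
      t, p, q, rfl, hpq, mem_blues.1 hmem, hq, by rwa [hside]⟩
  · omega

theorem IsKth.exists_crossings (hγ : A.IsKth (blues blue) k γ) (hk : 1 ≤ k) (hn : 2 ≤ n)
    {δ : ℤ} (hchg : A.IsChanging blue δ γ) :
    (∃ P ∈ A.balancedPairs blue δ, A.BlueSideCount blue P (k - 1)) ∧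
      ∃ P ∈ A.balancedPairs blue δ, A.BlueSideCount blue P (#(blues blue) - k) := by
  obtain ⟨⟨a, ha⟩, b, hb⟩ := hchg
  have hT : (0 : ℤ) < 2 * n.choose 2 := by have := Nat.choose_pos (k := 2) hn; omega
  have hper := hγ.cweight_periodic blue
  constructor
  · obtain ⟨t, ht, ht'⟩ := (hper.comp (δ ≤ ·)).exists_not_and_succ hT (not_le.2 ha) hb
    exact hγ.exists_up_crossing (not_le.1 ht) ht'
  · obtain ⟨t, ht, ht'⟩ := (hper.comp (· < δ)).exists_not_and_succ hT (not_lt.2 hb) ha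
    exact hγ.exists_down_crossing hk (not_lt.1 ht) ht'

theorem exists_blueSideCount_of_isChanging (hn : 2 ≤ n) {b δ : ℕ} (hb : #(blues blue) = b)
    (hchg : ∀ k γ, δ + 1 ≤ k → 2 * k ≤ b + 1 → A.IsKth (blues blue) k γ →
      A.IsChanging blue δ γ)
    {j : ℕ} (hj : δ ≤ j) (hjb : j + δ < b) :
    ∃ P ∈ A.balancedPairs blue δ, A.BlueSideCount blue P j := by
  by_cases hup : 2 * j < b
  · obtain ⟨γ, hγ⟩ := A.exists_isKth (blues blue) (k := j + 1) (by omega) (by omega)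
    exact (hγ.exists_crossings (by omega) hn (hchg _ γ (by omega) (by omega) hγ)).1
  · obtain ⟨γ, hγ⟩ := A.exists_isKth (blues blue) (k := b - j) (by omega) (by omega)
    have := (hγ.exists_crossings (by omega) hn (hchg _ γ (by omega) (by omega) hγ)).2
    rwa [hb, Nat.sub_sub_self (by omega)] at this

theorem card_le_ncard_balancedPairs {δ : ℤ} {S : Finset ℕ}
    (h : ∀ j ∈ S, ∃ P ∈ A.balancedPairs blue δ, A.BlueSideCount blue P j) :
    #S ≤ (A.balancedPairs blue δ).ncard := by
  rcases S.eq_empty_or_nonempty with rfl | ⟨j₀, hj₀⟩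
  · simp
  have : Nonempty (Sym2 (Fin n)) := ⟨(h j₀ hj₀).choose⟩
  choose! P hP hPj using h
  rw [← Set.ncard_coe_finset]
  exact Set.ncard_le_ncard_of_injOn P hP fun i hi j hj hij => (hPj i hi).unique (hij ▸ hPj j hj)

end Blue

end AllowableSeq

open AllowableSeq

theorem case1_all_changing (n b r δ : ℕ) (A : AllowableSeq n) (blue : Fin n → Bool)
    (hn : n = b + r)
    (hb : (Finset.univ.filter (fun x => blue x = true)).card = b)
    (hr : (Finset.univ.filter (fun x => blue x = false)).card = r)
    (hbr : b = r + 2 * δ)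
    (hall : ∀ k : ℕ, δ + 1 ≤ k → k ≤ b / 2 →
      ∀ γ : ℤ → Fin n, A.IsKth (Finset.univ.filter (fun x => blue x = true)) k γ →
        ¬ (∀ t : ℤ, (δ : ℤ) ≤ A.cweight blue γ t) ∧
        ¬ (∀ t : ℤ, A.cweight blue γ t < (δ : ℤ))) :
    r ≤ (A.balancedPairs blue (δ : ℤ)).ncard := by
  rcases Nat.eq_zero_or_pos r with rfl | hr₀
  · exact Nat.zero_le _
  change #(blues blue) = b at hb
  have hsum : ∑ x, wt blue x = 2 * δ := by rw [sum_wt, hb, hr]; omega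
  have hchg (k : ℕ) (γ : ℤ → Fin n) (hk : δ + 1 ≤ k) (hkb : 2 * k ≤ b + 1)
      (hγ : A.IsKth (blues blue) k γ) : A.IsChanging blue δ γ := by
    by_cases hmid : 2 * k = b + 1
    · exact hγ.isChanging_of_two_mul_eq (by omega) hsum
    · simpa only [IsChanging, not_forall, not_le, not_lt] using hall k hk (by omega) γ hγ
  calc r = #(Finset.Ico δ (b - δ)) := by rw [Nat.card_Ico]; omega
    _ ≤ (A.balancedPairs blue δ).ncard := card_le_ncard_balancedPairs fun j hj =>
      exists_blueSideCount_of_isChanging (by omega) hb hchg (Finset.mem_Ico.1 hj).1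
        (by have := (Finset.mem_Ico.1 hj).2; omega)
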